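/- arXiv:1604.03924 — 4 statements merged into one kernel-verified Lean document; each statement's English description precedes it below -/
import Mathlib

section
/- Let A : X^n → T be a (possibly randomized) algorithm selecting a test statistic, and suppose A has β-approximate max-information at most k over product distributions, i.e. I^β_{∞,P}(A,n) ≤ k. Then the function γ(α) = max((α − β)/2^k, 0) is a valid p-value correction function for A: for every significance level α ∈ [0,1] and every distribution P over X, the probability (over X ~ P^n and the coins of A) that the selected statistic φ_i = A(X) satisfies both P ∈ H_0^(i) and p_i(φ_i(X)) ≤ γ(α) is at most α. -/
open scoped ENNReal

/-- The probability that a sample from the probability mass function `μ` lands in `S`. -/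
noncomputable def prob {α : Type*} (μ : PMF α) (S : Set α) : ℝ :=
  (μ.toOuterMeasure S).toReal

/-- The independent coupling of two distributions: a pair whose components are independent
with the given marginal distributions. -/
noncomputable def indepPair {α β : Type*} (p : PMF α) (q : PMF β) : PMF (α × β) :=
  p.bind fun a => q.map fun b => (a, b)

/-- `MaxInfoLe μ b k` : the `b`-approximate max-information of the joint distribution `μ`
is at most `k` (measured in bits):  for every event `O` with `Pr[(X,Z) ∈ O] > b`,
`Pr[(X,Z) ∈ O] - b ≤ 2^k · Pr[X ⊗ Z ∈ O]`. -/
def MaxInfoLe {α β : Type*} (μ : PMF (α × β)) (b k : ℝ) : Prop :=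
  ∀ O : Set (α × β), b < prob μ O →
    prob μ O - b ≤ 2 ^ k * prob (indepPair (μ.map Prod.fst) (μ.map Prod.snd)) O

/-- The `n`-fold product (i.i.d.) distribution `P^n` on datasets of size `n`. -/
noncomputable def iidPMF {X : Type*} (P : PMF X) : (n : ℕ) → PMF (Fin n → X)
  | 0 => PMF.pure (fun i => i.elim0)
  | n + 1 => P.bind fun a => (iidPMF P n).map fun x => Fin.cons a x

/-- The joint distribution of `(X, A(X))` where `X ∼ μ` and `A` is a randomized algorithm. -/
noncomputable def jointPMF {D Y : Type*} (μ : PMF D) (A : D → PMF Y) : PMF (D × Y) :=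
  μ.bind fun x => (A x).map fun y => (x, y)

/-! Under the null the p-value is super-uniform, so for every fixed selection `t` the set of
datasets on which `φ t` has p-value at most `γ` has mass at most `γ`; hence under the
independent coupling `X ⊗ A(X)` the bad event has mass at most `γ`. Max-information transfers
this to the true joint law up to the factor `2^k` and the slack `β`, and `γ = (α - β)/2^k`
makes the total `α`. When `α < β` we have `γ = 0`, and a zero p-value only occurs on a null set
of datasets. -/

open MeasureTheory

namespace PMF

variable {α β : Type*}

lemma toOuterMeasure_ne_top (p : PMF α) (s : Set α) : p.toOuterMeasure s ≠ ⊤ :=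
  ne_top_of_le_ne_top ENNReal.one_ne_top <|
    (measure_mono (Set.subset_univ s)).trans_eq (p.toOuterMeasure_apply_eq_one_iff _ |>.2 le_top)

lemma toOuterMeasure_le_of_forall_finset {p : PMF α} {s : Set α} {c : ℝ≥0∞}
    (h : ∀ t : Finset α, ↑t ⊆ s → p.toOuterMeasure ↑t ≤ c) : p.toOuterMeasure s ≤ c := by
  classical
  rw [toOuterMeasure_apply, ENNReal.tsum_eq_iSup_sum]
  refine iSup_le fun t => ?_
  rw [← Finset.sum_filter_add_sum_filter_not t (· ∈ s)]
  have hout : ∑ x ∈ t.filter (· ∉ s), s.indicator p x = 0 :=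
    Finset.sum_eq_zero fun x hx => Set.indicator_of_notMem (Finset.mem_filter.1 hx).2 _
  have hin : ∑ x ∈ t.filter (· ∈ s), s.indicator p x = p.toOuterMeasure ↑(t.filter (· ∈ s)) := by
    rw [toOuterMeasure_apply_finset]
    exact Finset.sum_congr rfl fun x hx => Set.indicator_of_mem (Finset.mem_filter.1 hx).2 _
  rw [hout, add_zero, hin]
  exact h _ fun x hx => (Finset.mem_filter.1 hx).2

lemma indepPair_eq_bind_swap (p : PMF α) (q : PMF β) :
    indepPair p q = q.bind fun b => p.map fun a => (a, b) :=
  bind_comm p q fun a b => pure (a, b)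

lemma toOuterMeasure_indepPair_le {p : PMF α} {q : PMF β} {O : Set (α × β)} {c : ℝ≥0∞}
    (h : ∀ b, p.toOuterMeasure {a | (a, b) ∈ O} ≤ c) : (indepPair p q).toOuterMeasure O ≤ c := by
  rw [indepPair_eq_bind_swap, toOuterMeasure_bind_apply]
  calc ∑' b, q b * (p.map fun a => (a, b)).toOuterMeasure O
      ≤ ∑' b, q b * c := by
        refine ENNReal.tsum_le_tsum fun b => mul_le_mul_right ?_ _
        rw [toOuterMeasure_map_apply]
        exact h b
    _ = c := by rw [ENNReal.tsum_mul_right, q.tsum_coe, one_mul]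

end PMF

section
variable {α D T : Type*}

lemma prob_nonneg (μ : PMF α) (s : Set α) : 0 ≤ prob μ s := ENNReal.toReal_nonneg

lemma prob_mono (μ : PMF α) {s t : Set α} (h : s ⊆ t) : prob μ s ≤ prob μ t :=
  ENNReal.toReal_mono (μ.toOuterMeasure_ne_top t) (measure_mono h)

lemma toOuterMeasure_eq_ofReal_prob (μ : PMF α) (s : Set α) :
    μ.toOuterMeasure s = ENNReal.ofReal (prob μ s) :=
  (ENNReal.ofReal_toReal (μ.toOuterMeasure_ne_top s)).symm

lemma apply_toReal_le_prob (μ : PMF α) {s : Set α} {a : α} (ha : a ∈ s) :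
    (μ a).toReal ≤ prob μ s := by
  rw [← μ.toOuterMeasure_apply_singleton]
  exact prob_mono μ (Set.singleton_subset_iff.2 ha)

noncomputable def pValue (μ : PMF D) (f : D → ℝ) (x : D) : ℝ :=
  prob μ {y | f x ≤ f y}

lemma pValue_pos (μ : PMF D) (f : D → ℝ) {x : D} (hx : μ x ≠ 0) : 0 < pValue μ f x :=
  (ENNReal.toReal_pos hx (μ.apply_ne_top x)).trans_le
    (apply_toReal_le_prob μ (le_refl (f x) : x ∈ {y | f x ≤ f y}))

theorem toOuterMeasure_pValue_le (μ : PMF D) (f : D → ℝ) (γ : ℝ) :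
    μ.toOuterMeasure {x | pValue μ f x ≤ γ} ≤ ENNReal.ofReal γ := by
  classical
  refine PMF.toOuterMeasure_le_of_forall_finset fun t ht => ?_
  rcases t.eq_empty_or_nonempty with rfl | hne
  · simp
  -- a finite set of small p-values sits above its `f`-minimiser, whose p-value bounds its mass
  obtain ⟨x₀, hx₀, hmin⟩ := t.exists_min_image f hne
  calc μ.toOuterMeasure ↑t ≤ μ.toOuterMeasure {y | f x₀ ≤ f y} :=
        measure_mono fun y hy => hmin y hy
    _ = ENNReal.ofReal (pValue μ f x₀) := toOuterMeasure_eq_ofReal_prob μ _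
    _ ≤ ENNReal.ofReal γ := ENNReal.ofReal_le_ofReal (ht hx₀)

lemma jointPMF_map_fst (μ : PMF D) (A : D → PMF T) : (jointPMF μ A).map Prod.fst = μ := by
  rw [jointPMF, PMF.map_bind]
  conv_rhs => rw [← PMF.bind_pure μ]
  congr 1
  funext x
  rw [PMF.map_comp]
  exact PMF.map_const _ _

lemma prob_jointPMF_fst_preimage (μ : PMF D) (A : D → PMF T) (s : Set D) :
    prob (jointPMF μ A) (Prod.fst ⁻¹' s) = prob μ s := by
  rw [prob, ← PMF.toOuterMeasure_map_apply, jointPMF_map_fst, prob]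

lemma prob_jointPMF_null (μ : PMF D) (A : D → PMF T) {O : Set (D × T)}
    (hO : ∀ z ∈ O, μ z.1 = 0) : prob (jointPMF μ A) O = 0 := by
  refine le_antisymm ?_ (prob_nonneg _ _)
  calc prob (jointPMF μ A) O ≤ prob (jointPMF μ A) (Prod.fst ⁻¹' {x | μ x = 0}) :=
        prob_mono _ hO
    _ = prob μ {x | μ x = 0} := prob_jointPMF_fst_preimage μ A _
    _ = 0 := by
        rw [prob, (μ.toOuterMeasure_apply_eq_zero_iff _).2, ENNReal.toReal_zero]
        exact Set.disjoint_left.2 fun x hx hx' => hx hx'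

lemma prob_indepPair_pValue_le (μ : PMF D) (q : PMF T) (φ : T → D → ℝ) {γ : ℝ} (hγ : 0 ≤ γ) :
    prob (indepPair μ q) {z | pValue μ (φ z.2) z.1 ≤ γ} ≤ γ := by
  have h := PMF.toOuterMeasure_indepPair_le (q := q)
    (O := {z | pValue μ (φ z.2) z.1 ≤ γ}) fun t => toOuterMeasure_pValue_le μ (φ t) γ
  exact (ENNReal.toReal_mono ENNReal.ofReal_ne_top h).trans_eq (ENNReal.toReal_ofReal hγ)

theorem prob_jointPMF_pValue_le {μ : PMF D} {A : D → PMF T} (φ : T → D → ℝ) {b k α : ℝ}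
    (hmi : MaxInfoLe (jointPMF μ A) b k) (hα : 0 ≤ α) :
    prob (jointPMF μ A) {z | pValue μ (φ z.2) z.1 ≤ max ((α - b) / 2 ^ k) 0} ≤ α := by
  set O := {z : D × T | pValue μ (φ z.2) z.1 ≤ max ((α - b) / 2 ^ k) 0}
  have h2k : (0 : ℝ) < 2 ^ k := Real.rpow_pos_of_pos two_pos k
  rcases le_or_gt b α with hbα | hαb
  · have hγ : max ((α - b) / 2 ^ k) 0 = (α - b) / 2 ^ k :=
      max_eq_left (div_nonneg (sub_nonneg.2 hbα) h2k.le)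
    rcases le_or_gt (prob (jointPMF μ A) O) b with hsmall | hbig
    · linarith
    have hindep := prob_indepPair_pValue_le μ ((jointPMF μ A).map Prod.snd) φ
      (le_max_right ((α - b) / 2 ^ k) 0)
    have hmiO := hmi O hbig
    rw [jointPMF_map_fst] at hmiO
    have := hmiO.trans (mul_le_mul_of_nonneg_left (hindep.trans_eq hγ) h2k.le)
    rw [mul_div_cancel₀ _ h2k.ne'] at this
    linarith
  · have hγ : max ((α - b) / 2 ^ k) 0 = 0 :=
      max_eq_right (div_nonpos_of_nonpos_of_nonneg (sub_nonpos.2 hαb.le) h2k.le)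
    -- a zero p-value is only attained off the support of `μ`
    have hnull : ∀ z ∈ O, μ z.1 = 0 := fun z hz => by
      by_contra hz'
      exact (pValue_pos μ (φ z.2) hz').not_ge (hγ ▸ hz)
    rw [prob_jointPMF_null μ A hnull]
    exact hα

end

theorem stmt_0_general {X T : Type*} {n : ℕ} (A : (Fin n → X) → PMF T)
    (φ : T → (Fin n → X) → ℝ) (H0 : T → Set (PMF X)) (b k : ℝ)
    (hmi : ∀ P : PMF X, MaxInfoLe (jointPMF (iidPMF P n) A) b k)
    (α : ℝ) (hα0 : 0 ≤ α) (P : PMF X) :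
    prob (jointPMF (iidPMF P n) A)
      {p : (Fin n → X) × T |
        P ∈ H0 p.2 ∧
        prob (iidPMF P n) {x | φ p.2 p.1 ≤ φ p.2 x} ≤ max ((α - b) / 2 ^ k) 0} ≤ α :=
  (prob_mono _ fun _ hz => hz.2).trans (prob_jointPMF_pValue_le φ (hmi P) hα0)

/-- If the selection procedure `A` has `b`-approximate max-information at most
`k` over product distributions, then `γ(α) = max ((α - b)/2^k) 0` is a valid p-value correction
function: for every `α ∈ [0,1]` and every distribution `P` over `X`, the probability (over
`X ∼ P^n` and the coins of `A`) that the selected statistic `φ (A X)` has `P` in its null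
hypothesis and p-value at most `γ(α)` is at most `α`.  Here the p-value of the selected test
statistic `φ t` at the observed value `φ t x` is `Pr_{x' ∼ P^n}[φ t x' ≥ φ t x]`. -/
theorem stmt_0 {X T : Type*} {n : ℕ} (A : (Fin n → X) → PMF T)
    (φ : T → (Fin n → X) → ℝ) (H0 : T → Set (PMF X)) (b k : ℝ)
    (hmi : ∀ P : PMF X, MaxInfoLe (jointPMF (iidPMF P n) A) b k)
    (α : ℝ) (hα0 : 0 ≤ α) (hα1 : α ≤ 1) (P : PMF X) :
    prob (jointPMF (iidPMF P n) A)
      {p : (Fin n → X) × T |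
        P ∈ H0 p.2 ∧
        prob (iidPMF P n) {x | φ p.2 p.1 ≤ φ p.2 x} ≤ max ((α - b) / 2 ^ k) 0} ≤ α :=
  stmt_0_general A φ H0 b k hmi α hα0 P
end

section
/- Let X and Y be jointly distributed discrete random variables, with X taking values in a finite set Σ. If the mutual information I(X;Y), measured in bits (base-2 logarithms), satisfies I(X;Y) ≤ m, then for every k > 0 the β(k)-approximate max-information satisfies I_∞^{β(k)}(X;Y) ≤ k, where β(k) = (m + 0.54)/k. -/
open scoped ENNReal

/-- The mutual information, measured in bits, between the two components of a joint
distribution `μ`. -/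
noncomputable def mutualInfoBits {α β : Type*} (μ : PMF (α × β)) : ℝ :=
  ∑' q : α × β, (μ q).toReal *
    Real.logb 2 ((μ q).toReal / (((μ.map Prod.fst) q.1).toReal * ((μ.map Prod.snd) q.2).toReal))

lemma indepPair_apply {α β : Type*} (p : PMF α) (q : PMF β) (x : α) (y : β) :
    indepPair p q (x, y) = p x * q y := by
  classical
  simp only [indepPair, PMF.bind_apply, PMF.map_apply]
  rw [tsum_eq_single x]
  · rw [tsum_eq_single y]
    · simp
    · intro b hb; simp [Prod.ext_iff, hb.symm]
  · intro a ha
    have : ∀ b, (if (x, y) = (a, b) then q b else 0) = 0 := by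
      intro b
      rw [if_neg]
      simp [Prod.ext_iff]
      intro h; exact absurd h.symm ha
    simp [this]
    exact Or.inr (fun h => absurd h.symm ha)

lemma summable_pmf_toReal {α : Type*} (μ : PMF α) :
    Summable (fun a => (μ a).toReal) := by
  have := μ.tsum_coe
  exact ENNReal.summable_toReal (by simp [this])

lemma prob_eq_tsum {α : Type*} (μ : PMF α) (S : Set α) :
    prob μ S = ∑' a, S.indicator (fun a => (μ a).toReal) a := by
  rw [prob, PMF.toOuterMeasure_apply, ENNReal.tsum_toReal_eq]
  · congr 1; funext a
    by_cases h : a ∈ S <;> simp [Set.indicator, h]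
  · intro a
    by_cases h : a ∈ S <;> simp [Set.indicator, h, PMF.apply_ne_top]

lemma marg_fst_le {α β : Type*} (μ : PMF (α × β)) (q : α × β) :
    μ q ≤ (μ.map Prod.fst) q.1 := by
  classical
  rw [PMF.map_apply]
  have := ENNReal.le_tsum (f := fun a : α × β => if q.1 = a.1 then μ a else 0) q
  simpa using this

lemma marg_snd_le {α β : Type*} (μ : PMF (α × β)) (q : α × β) :
    μ q ≤ (μ.map Prod.snd) q.2 := by
  classical
  rw [PMF.map_apply]
  have := ENNReal.le_tsum (f := fun a : α × β => if q.2 = a.2 then μ a else 0) q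
  simpa using this

lemma log_le_div_e {y : ℝ} (hy : 0 < y) : Real.log y ≤ y / Real.exp 1 := by
  have h := Real.log_le_sub_one_of_pos (x := y / Real.exp 1)
    (div_pos hy (Real.exp_pos 1))
  rw [Real.log_div (ne_of_gt hy) (ne_of_gt (Real.exp_pos 1)), Real.log_exp] at h
  linarith

lemma neg_part_bound {F G : ℝ} (hF : 0 ≤ F) (hG : 0 ≤ G) :
    F * Real.logb 2 (G / F) ≤ G / (Real.exp 1 * Real.log 2) := by
  have hRHS : 0 ≤ G / (Real.exp 1 * Real.log 2) :=
    div_nonneg hG (le_of_lt (mul_pos (Real.exp_pos 1) (Real.log_pos one_lt_two)))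
  rcases eq_or_lt_of_le hF with h | hF
  · simp [← h]; exact hRHS
  rcases eq_or_lt_of_le hG with h | hG'
  · simp [← h]
  have hlog2 : 0 < Real.log 2 := Real.log_pos one_lt_two
  have h1 : Real.log (G / F) ≤ (G / F) / Real.exp 1 := log_le_div_e (div_pos hG' hF)
  have h2 : F * Real.log (G / F) ≤ G / Real.exp 1 := by
    calc F * Real.log (G / F) ≤ F * ((G / F) / Real.exp 1) :=
          mul_le_mul_of_nonneg_left h1 (le_of_lt hF)
      _ = G / Real.exp 1 := by field_simp
  have heq : F * Real.logb 2 (G / F) = F * Real.log (G / F) / Real.log 2 := by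
    rw [Real.logb]; ring
  rw [heq, show G / (Real.exp 1 * Real.log 2) = (G / Real.exp 1) / Real.log 2 by
    rw [div_div]]
  gcongr

lemma inv_e_log2_le : (Real.exp 1 * Real.log 2)⁻¹ ≤ 0.54 := by
  have h1 : (2.7182818283 : ℝ) < Real.exp 1 := Real.exp_one_gt_d9
  have h2 : (0.6931471803 : ℝ) < Real.log 2 := Real.log_two_gt_d9
  have h3 : (1.852 : ℝ) < Real.exp 1 * Real.log 2 := by nlinarith
  rw [inv_le_comm₀ (by linarith) (by norm_num)]
  calc (0.54:ℝ)⁻¹ ≤ 1.852 := by norm_num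
    _ ≤ Real.exp 1 * Real.log 2 := le_of_lt h3

/-- Let `X` and `Y` be jointly distributed discrete random variables (with
joint distribution `μ`), where `X` takes values in a finite set `σ`.  If the mutual information
(in bits) satisfies `I(X;Y) ≤ m`, then for every `k > 0` the `β(k)`-approximate max-information
satisfies `I_∞^{β(k)}(X;Y) ≤ k`, where `β(k) = (m + 0.54)/k`. -/
theorem stmt_2 {σ Y : Type*} [Fintype σ] (μ : PMF (σ × Y)) (m : ℝ)
    (hm : mutualInfoBits μ ≤ m) :
    ∀ k : ℝ, 0 < k → MaxInfoLe μ ((m + 0.54) / k) k := by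
  classical
  intro k hk O hO
  set p := μ.map Prod.fst with hp
  set r := μ.map Prod.snd with hr
  set F : σ × Y → ℝ := fun q => (μ q).toReal with hFdef
  set G : σ × Y → ℝ := fun q => (p q.1).toReal * (r q.2).toReal with hGdef
  set h : σ × Y → ℝ := fun q => F q * Real.logb 2 (F q / G q) with hhdef
  have hF0 : ∀ q, 0 ≤ F q := fun q => ENNReal.toReal_nonneg
  have hG0 : ∀ q, 0 ≤ G q := fun q => mul_nonneg ENNReal.toReal_nonneg ENNReal.toReal_nonneg
  have hFp : ∀ q, F q ≤ (p q.1).toReal := fun q =>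
    ENNReal.toReal_mono (PMF.apply_ne_top _ _) (marg_fst_le μ q)
  have hFr : ∀ q, F q ≤ (r q.2).toReal := fun q =>
    ENNReal.toReal_mono (PMF.apply_ne_top _ _) (marg_snd_le μ q)
  have hGpi : ∀ q : σ × Y, G q = ((indepPair p r) q).toReal := by
    intro q
    rw [show q = (q.1, q.2) from rfl, indepPair_apply, ENNReal.toReal_mul]
  have hFsum : Summable F := summable_pmf_toReal μ
  have hGeq : G = fun q => ((indepPair p r) q).toReal := funext hGpi
  have hGsum : Summable G := by rw [hGeq]; exact summable_pmf_toReal _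
  have hGtsum : ∑' q, G q = 1 := by
    calc ∑' q, G q = ∑' q, ((indepPair p r) q).toReal := tsum_congr hGpi
      _ = (∑' q, (indepPair p r) q).toReal :=
        (ENNReal.tsum_toReal_eq (fun q => PMF.apply_ne_top _ _)).symm
      _ = 1 := by rw [(indepPair p r).tsum_coe]; simp
  -- positive part bound
  set c : σ → ℝ := fun x => Real.logb 2 (((p x).toReal)⁻¹) with hcdef
  have hc0 : ∀ x, 0 ≤ c x := by
    intro x
    rcases eq_or_lt_of_le (ENNReal.toReal_nonneg (a := p x)) with h' | h'
    · simp [hcdef, ← h']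
    · apply Real.logb_nonneg one_lt_two
      have hple : (p x).toReal ≤ 1 := by
        have := ENNReal.toReal_mono ENNReal.one_ne_top (p.coe_le_one x)
        simpa using this
      rw [one_le_inv_iff₀]
      exact ⟨h', hple⟩
  have hub : ∀ q, h q ≤ F q * c q.1 := by
    intro q
    rcases eq_or_lt_of_le (hF0 q) with h' | hFq
    · simp [hhdef, ← h']
    · have hpq : 0 < (p q.1).toReal := lt_of_lt_of_le hFq (hFp q)
      have hrq : 0 < (r q.2).toReal := lt_of_lt_of_le hFq (hFr q)
      have hGq : 0 < G q := mul_pos hpq hrq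
      apply mul_le_mul_of_nonneg_left _ (hF0 q)
      show Real.logb 2 (F q / G q) ≤ Real.logb 2 ((p q.1).toReal)⁻¹
      apply Real.logb_le_logb_of_le one_lt_two (div_pos hFq hGq)
      rw [div_le_iff₀ hGq, hGdef]
      calc F q ≤ (r q.2).toReal := hFr q
        _ = ((p q.1).toReal)⁻¹ * ((p q.1).toReal * (r q.2).toReal) := by
          field_simp
  have hu_sum : Summable (fun q : σ × Y => F q * c q.1) := by
    set C := ∑ x : σ, c x with hC
    have hcC : ∀ x, c x ≤ C :=
      fun x => Finset.single_le_sum (fun i _ => hc0 i) (Finset.mem_univ x)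
    exact Summable.of_nonneg_of_le (fun q => mul_nonneg (hF0 q) (hc0 q.1))
      (fun q => mul_le_mul_of_nonneg_left (hcC q.1) (hF0 q))
      (hFsum.mul_right C)
  set hplus : σ × Y → ℝ := fun q => max (h q) 0 with hplusdef
  set hminus : σ × Y → ℝ := fun q => max (-h q) 0 with hminusdef
  have hplus0 : ∀ q, 0 ≤ hplus q := fun q => le_max_right _ _
  have hplus_le : ∀ q, hplus q ≤ F q * c q.1 :=
    fun q => max_le (hub q) (mul_nonneg (hF0 q) (hc0 q.1))
  have hplus_sum : Summable hplus :=
    Summable.of_nonneg_of_le hplus0 hplus_le hu_sum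
  set L : ℝ := (Real.exp 1 * Real.log 2)⁻¹ with hLdef
  have hL0 : 0 ≤ L := by positivity
  have hneg : ∀ q, -h q ≤ G q * L := by
    intro q
    rcases eq_or_lt_of_le (hF0 q) with h' | hFq
    · simp [hhdef, ← h']
      exact mul_nonneg (hG0 q) hL0
    · rcases eq_or_lt_of_le (hG0 q) with h' | hGq
      · simp [hhdef, ← h', div_zero, Real.logb_zero]
      · have heq : -h q = F q * Real.logb 2 (G q / F q) := by
          rw [hhdef]
          simp only
          rw [Real.logb_div (ne_of_gt hFq) (ne_of_gt hGq),
            Real.logb_div (ne_of_gt hGq) (ne_of_gt hFq)]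
          ring
        rw [heq, show G q * L = G q / (Real.exp 1 * Real.log 2) from by
          rw [hLdef, div_eq_mul_inv]]
        exact neg_part_bound (hF0 q) (hG0 q)
  have hminus_le : ∀ q, hminus q ≤ G q * L :=
    fun q => max_le (hneg q) (mul_nonneg (hG0 q) hL0)
  have hminus_sum : Summable hminus :=
    Summable.of_nonneg_of_le (fun q => le_max_right _ _) hminus_le (hGsum.mul_right L)
  have hdiff : ∀ q, h q = hplus q - hminus q := fun q => (max_zero_sub_max_neg_zero_eq_self (h q)).symm
  have hhsum : Summable h := by
    have : h = fun q => hplus q - hminus q := funext hdiff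
    rw [this]; exact hplus_sum.sub hminus_sum
  have hsum_minus_le : ∑' q, hminus q ≤ 0.54 := by
    calc ∑' q, hminus q ≤ ∑' q, G q * L :=
        Summable.tsum_le_tsum hminus_le hminus_sum (hGsum.mul_right L)
      _ = L := by rw [tsum_mul_right, hGtsum, one_mul]
      _ ≤ 0.54 := inv_e_log2_le
  have hIm : ∑' q, h q ≤ m := hm
  have keyA : ∑' q, hplus q ≤ m + 0.54 := by
    have heq2 : ∑' q, hplus q = ∑' q, h q + ∑' q, hminus q := by
      rw [← Summable.tsum_add hhsum hminus_sum]
      apply tsum_congr; intro q; rw [hdiff q]; ring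
    rw [heq2]; linarith
  -- the bad event
  set B : Set (σ × Y) := {q | (2:ℝ)^k * G q < F q} with hBdef
  have hindB_sum : Summable (B.indicator F) := hFsum.indicator B
  have hindO_sum : Summable (O.indicator F) := hFsum.indicator O
  have hindG_sum : Summable (O.indicator G) := hGsum.indicator O
  have hindF_nonneg : ∀ (S : Set (σ × Y)) q, 0 ≤ S.indicator F q :=
    fun S q => Set.indicator_nonneg (fun q _ => hF0 q) q
  have hindG_nonneg : ∀ q, 0 ≤ O.indicator G q :=
    fun q => Set.indicator_nonneg (fun q _ => hG0 q) q
  have h2k : (0:ℝ) ≤ (2:ℝ)^k := Real.rpow_nonneg (by norm_num) k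
  have hprobB : prob μ B ≤ (m + 0.54) / k := by
    rw [le_div_iff₀ hk, prob_eq_tsum]
    have step : ∀ q, B.indicator F q * k ≤ hplus q := by
      intro q
      by_cases hq : q ∈ B
      · rw [Set.indicator_of_mem hq]
        have hqlt : (2:ℝ)^k * G q < F q := hq
        have hFq : 0 < F q := lt_of_le_of_lt (mul_nonneg h2k (hG0 q)) hqlt
        have hGq : 0 < G q := by
          rcases eq_or_lt_of_le (hG0 q) with h' | h'
          · exfalso
            rcases mul_eq_zero.1 h'.symm with h'' | h''
            · exact absurd (lt_of_lt_of_le hFq (hFp q)) (by rw [h'']; exact lt_irrefl 0)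
            · exact absurd (lt_of_lt_of_le hFq (hFr q)) (by rw [h'']; exact lt_irrefl 0)
          · exact h'
        have hratio : (2:ℝ)^k < F q / G q := (lt_div_iff₀ hGq).2 (by linarith [hqlt])
        have hlogk : k < Real.logb 2 (F q / G q) := by
          rw [Real.lt_logb_iff_rpow_lt one_lt_two
            (lt_trans (Real.rpow_pos_of_pos (by norm_num) k) hratio)]
          exact hratio
        calc F q * k ≤ F q * Real.logb 2 (F q / G q) :=
            mul_le_mul_of_nonneg_left (le_of_lt hlogk) (hF0 q)
          _ = h q := rfl
          _ ≤ hplus q := le_max_left _ _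
      · rw [Set.indicator_of_notMem hq, zero_mul]
        exact hplus0 q
    have hmul : (∑' q, B.indicator F q) * k = ∑' q, B.indicator F q * k :=
      tsum_mul_right.symm
    rw [hmul]
    exact le_trans (Summable.tsum_le_tsum step (hindB_sum.mul_right k) hplus_sum) keyA
  have hOsplit : prob μ O ≤ prob μ B + (2:ℝ)^k * prob (indepPair p r) O := by
    rw [prob_eq_tsum, prob_eq_tsum, prob_eq_tsum]
    have hGrw : (fun q => ((indepPair p r) q).toReal) = G := hGeq.symm
    rw [hGrw]
    have hpt : ∀ q, O.indicator F q ≤ B.indicator F q + (2:ℝ)^k * O.indicator G q := by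
      intro q
      by_cases hqB : q ∈ B
      · calc O.indicator F q ≤ F q := Set.indicator_le_self' (fun q _ => hF0 q) q
          _ = B.indicator F q := (Set.indicator_of_mem hqB F).symm
          _ ≤ _ := le_add_of_nonneg_right (mul_nonneg h2k (hindG_nonneg q))
      · have hq' : F q ≤ (2:ℝ)^k * G q := le_of_not_gt hqB
        by_cases hqO : q ∈ O
        · rw [Set.indicator_of_mem hqO, Set.indicator_of_mem hqO]
          calc F q ≤ (2:ℝ)^k * G q := hq'
            _ ≤ _ := le_add_of_nonneg_left (hindF_nonneg B q)
        · rw [Set.indicator_of_notMem hqO, Set.indicator_of_notMem hqO]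
          have := hindF_nonneg B q
          nlinarith
    calc ∑' q, O.indicator F q
        ≤ ∑' q, (B.indicator F q + (2:ℝ)^k * O.indicator G q) :=
          Summable.tsum_le_tsum hpt hindO_sum (hindB_sum.add (hindG_sum.mul_left _))
      _ = (∑' q, B.indicator F q) + (2:ℝ)^k * ∑' q, O.indicator G q := by
          rw [Summable.tsum_add hindB_sum (hindG_sum.mul_left _), tsum_mul_left]
  linarith [hprobB, hOsplit]
end

section
/- Let X be a countable data domain, A : X^n → Y an (ε,δ)-differentially private algorithm, and X = (X₁,…,X_n) ~ P^n for a distribution P over X. Then for each i ∈ {1,…,n} and each prefix x₁^{i−1} = (x₁,…,x_{i−1}) ∈ X^{i−1} with positive probability, the joint distribution of (A(X), X_i) conditioned on X₁^{i−1} = x₁^{i−1} is (ε,δ)-indistinguishable from the product of the conditional distribution of A(X) given X₁^{i−1} = x₁^{i−1} and the (unconditional) marginal distribution of X_i. -/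
open scoped ENNReal

/-- Two datasets are neighboring if they differ in at most one entry. -/
def Neighbor {X : Type*} {n : ℕ} (x x' : Fin n → X) : Prop :=
  ∃ i : Fin n, ∀ j : Fin n, j ≠ i → x j = x' j

/-- `(ε,δ)`-differential privacy of a randomized algorithm `A` on datasets of size `n`. -/
def DiffPrivate {X Y : Type*} {n : ℕ} (A : (Fin n → X) → PMF Y) (ε δ : ℝ) : Prop :=
  ∀ x x' : Fin n → X, Neighbor x x' → ∀ O : Set Y,
    prob (A x) O ≤ Real.exp ε * prob (A x') O + δ

/-- `PrefixEq i w x` : the dataset `x` agrees with `w` on all coordinates before `i`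
(i.e. `x` has prefix `x₁^{i-1} = w₁^{i-1}`). -/
def PrefixEq {X : Type*} {n : ℕ} (i : Fin n) (w x : Fin n → X) : Prop :=
  ∀ j : Fin n, (j : ℕ) < (i : ℕ) → x j = w j

/-- The conditional probability `Pr[X_i ∈ O | A(X) = a, X₁^{i-1} = w₁^{i-1}]`, computed from the
joint distribution `μ` of the pair `(X, A(X))`. -/
noncomputable def condXi {X Y : Type*} {n : ℕ} (μ : PMF ((Fin n → X) × Y)) (i : Fin n)
    (a : Y) (w : Fin n → X) (O : Set X) : ℝ :=
  prob μ {p | p.2 = a ∧ PrefixEq i w p.1 ∧ p.1 i ∈ O} /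
    prob μ {p | p.2 = a ∧ PrefixEq i w p.1}

/-- `(ε,δ)`-indistinguishability of two distributions presented as set functions. -/
def IndistFn {D : Type*} (F G : Set D → ℝ) (ε δ : ℝ) : Prop :=
  ∀ O : Set D, F O ≤ Real.exp ε * G O + δ ∧ G O ≤ Real.exp ε * F O + δ

/-- The set `E_i(δ̂)` of "good" output/prefix pairs `(a, x₁^{i-1})`: those for which the marginal
distribution of `X_i` is `(3ε, δ̂)`-indistinguishable from the conditional distribution of `X_i`
given `A(X) = a` and `X₁^{i-1} = x₁^{i-1}`. -/
def Eset {X Y : Type*} {n : ℕ} (μ : PMF ((Fin n → X) × Y)) (P : PMF X) (i : Fin n)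
    (ε δhat : ℝ) : Set (Y × (Fin n → X)) :=
  {q | IndistFn (fun O => prob P O) (fun O => condXi μ i q.1 q.2 O) (3 * ε) δhat}

/-- The set `F_i` of output/prefix pairs `(a, x₁^i)` for which the likelihood ratio
`Pr[X_i = x_i | a, x₁^{i-1}] / Pr[X_i = x_i]` lies in `[e^{-6ε}, e^{6ε}]`. -/
def Fset {X Y : Type*} {n : ℕ} (μ : PMF ((Fin n → X) × Y)) (P : PMF X) (i : Fin n)
    (ε : ℝ) : Set (Y × (Fin n → X)) :=
  {q | Real.exp (-(6 * ε)) ≤ condXi μ i q.1 q.2 {q.2 i} / (P (q.2 i)).toReal ∧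
       condXi μ i q.1 q.2 {q.2 i} / (P (q.2 i)).toReal ≤ Real.exp (6 * ε)}

/-- `Z_i(a, x₁^i) = log₂( Pr[X_i = x_i | a, x₁^{i-1}] / Pr[X_i = x_i] )`. -/
noncomputable def Zi {X Y : Type*} {n : ℕ} (μ : PMF ((Fin n → X) × Y)) (P : PMF X)
    (i : Fin n) (q : Y × (Fin n → X)) : ℝ :=
  Real.logb 2 (condXi μ i q.1 q.2 {q.2 i} / (P (q.2 i)).toReal)

/-- The set `G_i(δ̂)` of "good" tuples: `(a, x₁^{i-1}) ∈ E_i(δ̂)` and `(a, x₁^i) ∈ F_i`. -/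
def Gset {X Y : Type*} {n : ℕ} (μ : PMF ((Fin n → X) × Y)) (P : PMF X) (i : Fin n)
    (ε δhat : ℝ) : Set (Y × (Fin n → X)) :=
  {q | q ∈ Eset μ P i ε δhat ∧ q ∈ Fset μ P i ε}

/-- `G_{≤ i}(δ̂)` : membership in `G_j(δ̂)` for every `j ≤ i`. -/
def GleSet {X Y : Type*} {n : ℕ} (μ : PMF ((Fin n → X) × Y)) (P : PMF X) (i : Fin n)
    (ε δhat : ℝ) : Set (Y × (Fin n → X)) :=
  {q | ∀ j : Fin n, j ≤ i → q ∈ Gset μ P j ε δhat}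

/-- `T_i(a, x₁^i)` equals `Z_i(a, x₁^i)` on the good set `G_{≤ i}(δ̂)` and `0` otherwise. -/
noncomputable def Ti {X Y : Type*} {n : ℕ} (μ : PMF ((Fin n → X) × Y)) (P : PMF X)
    (i : Fin n) (ε δhat : ℝ) : (Y × (Fin n → X)) → ℝ :=
  (GleSet μ P i ε δhat).indicator (Zi μ P i)

/-!
Let `Z ∼ P` be independent of `X ∼ P^n`. Exchanging `X_i` and `Z` preserves the law of `(X, Z)`
and, since `i` lies outside the prefix, the event `X₁^{i-1} = w₁^{i-1}`. After the exchange,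
`(A(X), X_i)` becomes `(A(X'), Z)` with `X' = X[i ↦ Z]` a neighbour of `X`, while the product
distribution is that of `(A(X), Z)`. Differential privacy, applied to `X` and `X'` and averaged
over the prefix event, therefore gives both inequalities. The additive `δ` picks up the
probability of the event as a factor, which cancels after conditioning.
-/

open Function

section General

variable {α β D Y : Type*}

lemma PMF.toOuterMeasure_le_one (p : PMF α) (s : Set α) : p.toOuterMeasure s ≤ 1 :=
  (p.toOuterMeasure.mono (Set.subset_univ s)).trans_eq
    ((p.toOuterMeasure_apply_eq_one_iff _).2 (Set.subset_univ _))

lemma PMF.toOuterMeasure_ne_top_s6 (p : PMF α) (s : Set α) : p.toOuterMeasure s ≠ ∞ :=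
  ne_top_of_le_ne_top ENNReal.one_ne_top (p.toOuterMeasure_le_one s)

lemma toOuterMeasure_jointPMF (μ : PMF D) (A : D → PMF Y) (S : Set D) (E : D → Set Y) :
    (jointPMF μ A).toOuterMeasure {p | p.1 ∈ S ∧ p.2 ∈ E p.1} =
      ∑' x, S.indicator μ x * (A x).toOuterMeasure (E x) := by
  simp only [jointPMF, PMF.toOuterMeasure_bind_apply, PMF.toOuterMeasure_map_apply]
  refine tsum_congr fun x => ?_
  by_cases hx : x ∈ S <;> simp [hx, Set.preimage]

lemma ENNReal.tsum_mul_le_of_le (ν f g : α → ℝ≥0∞) {c d : ℝ≥0∞}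
    (h : ∀ a, f a ≤ c * g a + d) :
    ∑' a, ν a * f a ≤ c * ∑' a, ν a * g a + d * ∑' a, ν a :=
  calc ∑' a, ν a * f a ≤ ∑' a, ν a * (c * g a + d) :=
        ENNReal.tsum_le_tsum fun a => mul_le_mul_right (h a) _
    _ = c * ∑' a, ν a * g a + d * ∑' a, ν a := by
        rw [← ENNReal.tsum_mul_left, ← ENNReal.tsum_mul_left, ← ENNReal.tsum_add]
        exact tsum_congr fun a => by ring

lemma ENNReal.tsum_indicator_toReal_div (O : Set β) (f : β → ℝ≥0∞) (hf : ∀ b, f b ≠ ∞)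
    (t : ℝ) : ∑' b, O.indicator (fun b => (f b).toReal / t) b =
      (∑' b, O.indicator f b).toReal / t := by
  rw [ENNReal.tsum_toReal_eq fun b => by by_cases hb : b ∈ O <;> simp [hb, hf], ← tsum_div_const]
  exact tsum_congr fun b => by by_cases hb : b ∈ O <;> simp [hb]

lemma ENNReal.toReal_div_le_of_le {a b s : ℝ≥0∞} (hb : b ≠ ∞) (hs : s ≠ ∞) {c δ : ℝ}
    (hc : 0 ≤ c) (hδ : 0 ≤ δ) (h : a ≤ ENNReal.ofReal c * b + ENNReal.ofReal δ * s) :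
    a.toReal / s.toReal ≤ c * (b.toReal / s.toReal) + δ := by
  have hreal : a.toReal ≤ c * b.toReal + δ * s.toReal := by
    have := ENNReal.toReal_mono (by finiteness) h
    rwa [ENNReal.toReal_add (by finiteness) (by finiteness), ENNReal.toReal_mul,
      ENNReal.toReal_mul, ENNReal.toReal_ofReal hc, ENNReal.toReal_ofReal hδ] at this
  rcases (ENNReal.toReal_nonneg (a := s)).eq_or_lt with hs0 | hs0
  · simp [← hs0, hδ]
  · rw [div_le_iff₀ hs0]
    calc a.toReal ≤ c * b.toReal + δ * s.toReal := hreal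
      _ = (c * (b.toReal / s.toReal) + δ) * s.toReal := by field_simp

lemma indistFn_toReal_div (F G : Set D → ℝ≥0∞) {s : ℝ≥0∞} (hs : s ≠ ∞) (hF : ∀ O, F O ≠ ∞)
    {ε δ : ℝ} (hδ : 0 ≤ δ)
    (hFG : ∀ O, F O ≤ ENNReal.ofReal (Real.exp ε) * G O + ENNReal.ofReal δ * s)
    (hGF : ∀ O, G O ≤ ENNReal.ofReal (Real.exp ε) * F O + ENNReal.ofReal δ * s) :
    IndistFn (fun O => (F O).toReal / s.toReal) (fun O => (G O).toReal / s.toReal) ε δ := by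
  intro O
  have hG : G O ≠ ∞ := ne_top_of_le_ne_top (by have := hF O; finiteness) (hGF O)
  exact ⟨ENNReal.toReal_div_le_of_le hG hs (Real.exp_nonneg ε) hδ (hFG O),
    ENNReal.toReal_div_le_of_le (hF O) hs (Real.exp_nonneg ε) hδ (hGF O)⟩

end General

section DataDomain

variable {X Y : Type*} {n : ℕ}

lemma iidPMF_apply (P : PMF X) : ∀ {n : ℕ} (x : Fin n → X), iidPMF P n x = ∏ j, P (x j)
  | 0, x => by simp [iidPMF, Subsingleton.elim x fun j => j.elim0]
  | n + 1, x => by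
    rw [iidPMF, PMF.bind_apply, tsum_eq_single (x 0), PMF.map_apply,
      tsum_eq_single (Fin.tail x), if_pos (Fin.cons_self_tail x).symm, iidPMF_apply,
      Fin.prod_univ_succ]
    · rfl
    · intro t ht
      rw [if_neg fun h => ht (by rw [h, Fin.tail_cons])]
    · intro a ha
      rw [PMF.map_apply, ENNReal.tsum_eq_zero.2, mul_zero]
      intro t
      rw [if_neg fun h => ha (by rw [h, Fin.cons_zero])]

lemma iidPMF_update_mul (P : PMF X) (x : Fin n → X) (i : Fin n) (z : X) :
    iidPMF P n (update x i z) * P (x i) = iidPMF P n x * P z := by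
  classical
  have hcomp (v : X) : (fun j => P (update x i v j)) = update (fun j => P (x j)) i (P v) :=
    funext fun j => apply_update (fun _ => P) x i v j
  rw [iidPMF_apply, iidPMF_apply, hcomp, Finset.prod_update_of_mem (Finset.mem_univ i),
    Finset.prod_eq_mul_prod_sdiff_singleton_of_mem (Finset.mem_univ i)]
  ring

lemma prefixEq_update_iff (i : Fin n) (w x : Fin n → X) (z : X) :
    PrefixEq i w (update x i z) ↔ PrefixEq i w x :=
  forall_congr' fun j => imp_congr_right fun hj => by
    rw [update_of_ne (Fin.ne_of_lt hj)]

lemma neighbor_update (x : Fin n → X) (i : Fin n) (z : X) : Neighbor x (update x i z) :=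
  ⟨i, fun _ hj => (update_of_ne hj z x).symm⟩

lemma Neighbor.symm {x x' : Fin n → X} (h : Neighbor x x') : Neighbor x' x :=
  let ⟨i, hi⟩ := h
  ⟨i, fun j hj => (hi j hj).symm⟩

section DiffPrivate

variable {A : (Fin n → X) → PMF Y} {ε δ : ℝ}

lemma DiffPrivate.delta_nonneg (hA : DiffPrivate A ε δ) {x x' : Fin n → X}
    (h : Neighbor x x') : 0 ≤ δ := by
  simpa [prob] using hA x x' h ∅

lemma DiffPrivate.toOuterMeasure_le (hA : DiffPrivate A ε δ) {x x' : Fin n → X}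
    (h : Neighbor x x') (T : Set Y) :
    (A x).toOuterMeasure T ≤
      ENNReal.ofReal (Real.exp ε) * (A x').toOuterMeasure T + ENNReal.ofReal δ := by
  rw [← ENNReal.ofReal_toReal ((A x).toOuterMeasure_ne_top_s6 T),
    ← ENNReal.ofReal_toReal ((A x').toOuterMeasure_ne_top_s6 T),
    ← ENNReal.ofReal_mul (Real.exp_nonneg ε)]
  exact (ENNReal.ofReal_le_ofReal (hA x x' h T)).trans ENNReal.ofReal_add_le

end DiffPrivate

def swapCoord (i : Fin n) (p : (Fin n → X) × X) : (Fin n → X) × X :=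
  (update p.1 i p.2, p.1 i)

lemma swapCoord_involutive (i : Fin n) : Involutive (swapCoord (X := X) i) := fun p => by
  simp [swapCoord]

noncomputable def prefixWeight (P : PMF X) (i : Fin n) (w : Fin n → X)
    (p : (Fin n → X) × X) : ℝ≥0∞ :=
  {x | PrefixEq i w x}.indicator (iidPMF P n) p.1 * P p.2

variable (P : PMF X) (i : Fin n) (w : Fin n → X)

lemma prefixWeight_swapCoord (p : (Fin n → X) × X) :
    prefixWeight P i w (swapCoord i p) = prefixWeight P i w p := by
  obtain ⟨x, z⟩ := p
  by_cases hx : PrefixEq i w x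
  · simp [prefixWeight, swapCoord, hx, prefixEq_update_iff, iidPMF_update_mul]
  · simp [prefixWeight, swapCoord, hx, prefixEq_update_iff]

lemma tsum_prefixWeight_mul_comp_swapCoord (F : (Fin n → X) × X → ℝ≥0∞) :
    ∑' p, prefixWeight P i w p * F (swapCoord i p) = ∑' p, prefixWeight P i w p * F p := by
  conv_lhs => enter [1, p]; rw [← prefixWeight_swapCoord P i w p]
  exact (swapCoord_involutive i).toPerm.tsum_eq fun p => prefixWeight P i w p * F p

lemma tsum_prefixWeight_mul_fst (f : (Fin n → X) → ℝ≥0∞) :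
    ∑' p, prefixWeight P i w p * f p.1 =
      ∑' x, {x | PrefixEq i w x}.indicator (iidPMF P n) x * f x := by
  rw [ENNReal.tsum_prod']
  refine tsum_congr fun x => ?_
  simp only [prefixWeight, mul_right_comm _ (P _) (f x), ENNReal.tsum_mul_left, P.tsum_coe,
    mul_one]

variable (A : (Fin n → X) → PMF Y)

lemma toOuterMeasure_jointPMF_prefixEq :
    (jointPMF (iidPMF P n) A).toOuterMeasure {p | PrefixEq i w p.1} =
      ∑' p, prefixWeight P i w p := by
  have hset : {p : (Fin n → X) × Y | PrefixEq i w p.1} =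
      {p | p.1 ∈ {x | PrefixEq i w x} ∧ p.2 ∈ Set.univ} := by
    simp only [Set.mem_univ, and_true]; rfl
  have hone (x : Fin n → X) : (A x).toOuterMeasure Set.univ = 1 :=
    ((A x).toOuterMeasure_apply_eq_one_iff _).2 (Set.subset_univ _)
  rw [hset, toOuterMeasure_jointPMF (iidPMF P n) A _ fun _ => Set.univ]
  simpa [hone] using (tsum_prefixWeight_mul_fst P i w 1).symm

lemma toOuterMeasure_jointPMF_prefixEq_inter (O : Set (Y × X)) :
    (jointPMF (iidPMF P n) A).toOuterMeasure {p | PrefixEq i w p.1 ∧ (p.2, p.1 i) ∈ O} =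
      ∑' p, prefixWeight P i w p * (A p.1).toOuterMeasure {y | (y, p.1 i) ∈ O} := by
  rw [tsum_prefixWeight_mul_fst P i w fun x => (A x).toOuterMeasure {y | (y, x i) ∈ O}]
  exact toOuterMeasure_jointPMF (iidPMF P n) A {x | PrefixEq i w x}
    fun x => {y | (y, x i) ∈ O}

lemma tsum_indicator_toOuterMeasure_jointPMF_output_mul (O : Set (Y × X)) :
    ∑' q, O.indicator
        (fun q => (jointPMF (iidPMF P n) A).toOuterMeasure {p | p.2 = q.1 ∧ PrefixEq i w p.1} *
          P q.2) q =
      ∑' p, prefixWeight P i w p * (A p.1).toOuterMeasure {y | (y, p.2) ∈ O} := by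
  have houtput (a : Y) :
      (jointPMF (iidPMF P n) A).toOuterMeasure {p | p.2 = a ∧ PrefixEq i w p.1} =
        ∑' x, {x | PrefixEq i w x}.indicator (iidPMF P n) x * A x a := by
    have hset : {p : (Fin n → X) × Y | p.2 = a ∧ PrefixEq i w p.1} =
        {p | p.1 ∈ {x | PrefixEq i w x} ∧ p.2 ∈ ({a} : Set Y)} := Set.ext fun _ => and_comm
    rw [hset, toOuterMeasure_jointPMF (iidPMF P n) A _ fun _ => {a}]
    simp_rw [PMF.toOuterMeasure_apply_singleton]
  have hindicator (q : Y × X) :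
      O.indicator (fun q => (∑' x, {x | PrefixEq i w x}.indicator (iidPMF P n) x * A x q.1) *
        P q.2) q = ∑' x, O.indicator (fun q => prefixWeight P i w (x, q.2) * A x q.1) q := by
    by_cases hq : q ∈ O
    · simp only [Set.indicator_of_mem hq, ← ENNReal.tsum_mul_right, prefixWeight]
      exact tsum_congr fun x => mul_right_comm _ _ _
    · simp [hq]
  simp_rw [houtput, hindicator]
  rw [ENNReal.tsum_comm, ENNReal.tsum_prod']
  refine tsum_congr fun x => ?_
  rw [ENNReal.tsum_prod', ENNReal.tsum_comm]
  refine tsum_congr fun z => ?_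
  rw [PMF.toOuterMeasure_apply, ← ENNReal.tsum_mul_left]
  refine tsum_congr fun a => ?_
  by_cases h : (a, z) ∈ O <;> simp [h]

end DataDomain

theorem stmt_6_general {X Y : Type*} {n : ℕ} (A : (Fin n → X) → PMF Y)
    (ε δ : ℝ) (hA : DiffPrivate A ε δ) (P : PMF X) (i : Fin n) (w : Fin n → X) :
    IndistFn
      (fun O : Set (Y × X) =>
        prob (jointPMF (iidPMF P n) A) {p | PrefixEq i w p.1 ∧ (p.2, p.1 i) ∈ O} /
          prob (jointPMF (iidPMF P n) A) {p | PrefixEq i w p.1})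
      (fun O : Set (Y × X) =>
        ∑' q : Y × X,
          Set.indicator O
            (fun q =>
              (prob (jointPMF (iidPMF P n) A) {p | p.2 = q.1 ∧ PrefixEq i w p.1} /
                  prob (jointPMF (iidPMF P n) A) {p | PrefixEq i w p.1}) * (P q.2).toReal)
            q)
      ε δ := by
  set μ := jointPMF (iidPMF P n) A
  have hproduct (O : Set (Y × X)) :
      ∑' q, O.indicator (fun q => (prob μ {p | p.2 = q.1 ∧ PrefixEq i w p.1} /
          prob μ {p | PrefixEq i w p.1}) * (P q.2).toReal) q =
        (∑' q, O.indicator (fun q => μ.toOuterMeasure {p | p.2 = q.1 ∧ PrefixEq i w p.1} *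
          P q.2) q).toReal / prob μ {p | PrefixEq i w p.1} := by
    rw [← ENNReal.tsum_indicator_toReal_div O _ fun q =>
      ENNReal.mul_ne_top (μ.toOuterMeasure_ne_top_s6 _) (P.apply_ne_top _)]
    simp only [prob, ENNReal.toReal_mul, div_mul_eq_mul_div]
  simp only [hproduct]
  refine indistFn_toReal_div _ _ (μ.toOuterMeasure_ne_top_s6 _) (fun O => μ.toOuterMeasure_ne_top_s6 _)
    (hA.delta_nonneg (neighbor_update w i (w i))) (fun O => ?_) (fun O => ?_) <;>
  rw [toOuterMeasure_jointPMF_prefixEq_inter, tsum_indicator_toOuterMeasure_jointPMF_output_mul,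
    toOuterMeasure_jointPMF_prefixEq]
  · rw [← tsum_prefixWeight_mul_comp_swapCoord]
    exact ENNReal.tsum_mul_le_of_le _ _ _ fun p => by
      simpa only [swapCoord, update_self] using
        hA.toOuterMeasure_le (neighbor_update p.1 i p.2).symm _
  · rw [← tsum_prefixWeight_mul_comp_swapCoord P i w
      fun p => (A p.1).toOuterMeasure {y | (y, p.1 i) ∈ O}]
    exact ENNReal.tsum_mul_le_of_le _ _ _ fun p => by
      simpa only [swapCoord, update_self] using hA.toOuterMeasure_le (neighbor_update p.1 i p.2) _

/-- **Claim 3.3.**  If `A` is `(ε,δ)`-differentially private and `X ∼ P^n`, then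
for each `i` and each prefix `w₁^{i-1}` of positive probability, the joint distribution of
`(A(X), X_i)` conditioned on `X₁^{i-1} = w₁^{i-1}` is `(ε,δ)`-indistinguishable from the product
of the conditional distribution of `A(X)` given `X₁^{i-1} = w₁^{i-1}` with the (unconditional)
marginal distribution of `X_i` (which is `P`). -/
theorem stmt_6 {X Y : Type*} [Countable X] {n : ℕ} (A : (Fin n → X) → PMF Y)
    (ε δ : ℝ) (hA : DiffPrivate A ε δ) (P : PMF X) (i : Fin n) (w : Fin n → X)
    (hw : 0 < prob (jointPMF (iidPMF P n) A) {p | PrefixEq i w p.1}) :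
    IndistFn
      (fun O : Set (Y × X) =>
        prob (jointPMF (iidPMF P n) A) {p | PrefixEq i w p.1 ∧ (p.2, p.1 i) ∈ O} /
          prob (jointPMF (iidPMF P n) A) {p | PrefixEq i w p.1})
      (fun O : Set (Y × X) =>
        ∑' q : Y × X,
          Set.indicator O
            (fun q =>
              (prob (jointPMF (iidPMF P n) A) {p | p.2 = q.1 ∧ PrefixEq i w p.1} /
                  prob (jointPMF (iidPMF P n) A) {p | PrefixEq i w p.1}) * (P q.2).toReal)
            q)
      ε δ :=
  stmt_6_general A ε δ hA P i w
end

section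
/- Let X be a countable data domain, A : X^n → Y a randomized algorithm, and X = (X₁,…,X_n) ~ P^n. Define F_i as the set of pairs (a, x₁^i) ∈ Y × X^i such that e^{−6ε} ≤ Pr[X_i = x_i | A(X) = a, X₁^{i−1} = x₁^{i−1}] / Pr[X_i = x_i] ≤ e^{6ε}. Suppose (a, x₁^{i−1}) is such that the marginal distribution of X_i is (3ε, δ̂)-indistinguishable from the conditional distribution of X_i given A(X) = a and X₁^{i−1} = x₁^{i−1}. Then Pr[ (A(X), X₁^i) ∈ F_i | A(X) = a, X₁^{i−1} = x₁^{i−1} ] ≥ 1 − δ'', where δ'' = 2δ̂/(1 − e^{−3ε}). -/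
open scoped ENNReal

/-- **Claim 3.5.**  Let `A : X^n → Y` be a randomized algorithm and `X ∼ P^n`.
If `(a, w₁^{i-1}) ∈ E_i(δ̂)` (i.e. the marginal of `X_i` is `(3ε,δ̂)`-indistinguishable from the
conditional distribution of `X_i` given `A(X) = a` and `X₁^{i-1} = w₁^{i-1}`), then
`Pr[(A(X), X₁^i) ∈ F_i | A(X) = a, X₁^{i-1} = w₁^{i-1}] ≥ 1 - δ''` where
`δ'' = 2δ̂/(1 - e^{-3ε})`. -/
theorem stmt_8 {X Y : Type*} [Countable X] {n : ℕ} (A : (Fin n → X) → PMF Y)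
    (ε δhat : ℝ) (hε : 0 < ε) (P : PMF X) (i : Fin n) (a : Y) (w : Fin n → X)
    (ha : 0 < prob (jointPMF (iidPMF P n) A) {p | p.2 = a ∧ PrefixEq i w p.1})
    (hE : (a, w) ∈ Eset (jointPMF (iidPMF P n) A) P i ε δhat) :
    1 - 2 * δhat / (1 - Real.exp (-(3 * ε))) ≤
      prob (jointPMF (iidPMF P n) A)
          {p | p.2 = a ∧ PrefixEq i w p.1 ∧
               (p.2, p.1) ∈ Fset (jointPMF (iidPMF P n) A) P i ε} /
        prob (jointPMF (iidPMF P n) A) {p | p.2 = a ∧ PrefixEq i w p.1} := by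
  classical
  have hc3 : Real.exp (-(3 * ε)) < 1 := by
    rw [Real.exp_lt_one_iff]; linarith
  have hc3' : (0:ℝ) < 1 - Real.exp (-(3 * ε)) := by linarith
  set μ : PMF ((Fin n → X) × Y) := jointPMF (iidPMF P n) A with hmudef
  set C : Set ((Fin n → X) × Y) := {p | p.2 = a ∧ PrefixEq i w p.1} with hCdef
  set c : ℝ := prob μ C with hcdef
  have hcpos : 0 < c := ha
  -- every outer measure value is ≤ 1
  have hle1 : ∀ S : Set ((Fin n → X) × Y), μ.toOuterMeasure S ≤ 1 := by
    intro S
    rw [PMF.toOuterMeasure_apply]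
    calc ∑' p, S.indicator μ p ≤ ∑' p, μ p :=
          ENNReal.tsum_le_tsum fun p => Set.indicator_le_self S μ p
      _ = 1 := μ.tsum_coe
  set q : X → ℝ≥0∞ := fun x => μ.toOuterMeasure (C ∩ {p | p.1 i = x}) with hqdef
  have hq_ne_top : ∀ x, q x ≠ ⊤ := fun x => ((hle1 _).trans_lt ENNReal.one_lt_top).ne
  -- L1 : decomposition of the conditional event over the value of X_i
  have L1 : ∀ O : Set X,
      μ.toOuterMeasure (C ∩ {p | p.1 i ∈ O}) = ∑' x, O.indicator q x := by
    intro O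
    have step1 : μ.toOuterMeasure (C ∩ {p | p.1 i ∈ O})
        = ∑' p : (Fin n → X) × Y, if p ∈ C ∧ p.1 i ∈ O then μ p else 0 := by
      rw [PMF.toOuterMeasure_apply]
      congr 1; funext p
      simp [Set.indicator_apply, Set.mem_inter_iff, Set.mem_setOf_eq]
    have step2 : ∀ p : (Fin n → X) × Y,
        (if p ∈ C ∧ p.1 i ∈ O then μ p else 0)
          = ∑' x : X, if p ∈ C ∧ p.1 i = x ∧ x ∈ O then μ p else 0 := by
      intro p
      rw [tsum_eq_single (p.1 i) (fun x hx => by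
        simp only [ite_eq_right_iff]
        rintro ⟨-, h2, -⟩
        exact absurd h2.symm hx)]
      simp
    have step3 : ∀ x : X, O.indicator q x
        = ∑' p : (Fin n → X) × Y, if p ∈ C ∧ p.1 i = x ∧ x ∈ O then μ p else 0 := by
      intro x
      by_cases hx : x ∈ O
      · rw [Set.indicator_of_mem hx, hqdef]
        simp only []
        rw [PMF.toOuterMeasure_apply]
        congr 1; funext p
        simp [Set.indicator_apply, Set.mem_inter_iff, Set.mem_setOf_eq, hx]
      · rw [Set.indicator_of_notMem hx]
        symm
        simp [hx]
    calc μ.toOuterMeasure (C ∩ {p | p.1 i ∈ O})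
        = ∑' p : (Fin n → X) × Y, if p ∈ C ∧ p.1 i ∈ O then μ p else 0 := step1
      _ = ∑' (p : (Fin n → X) × Y) (x : X), if p ∈ C ∧ p.1 i = x ∧ x ∈ O then μ p else 0 := by
          exact tsum_congr step2
      _ = ∑' (x : X) (p : (Fin n → X) × Y), if p ∈ C ∧ p.1 i = x ∧ x ∈ O then μ p else 0 :=
          ENNReal.tsum_comm
      _ = ∑' x, O.indicator q x := by
          exact (tsum_congr step3).symm
  -- real versions
  set rQ : X → ℝ := fun x => (q x).toReal / c with hrQdef
  set pi : X → ℝ := fun x => (P x).toReal with hpidef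
  have hrQ0 : ∀ x, 0 ≤ rQ x := fun x => div_nonneg ENNReal.toReal_nonneg hcpos.le
  have hpi0 : ∀ x, 0 ≤ pi x := fun x => ENNReal.toReal_nonneg
  have hind_eq : ∀ O : Set X, O.indicator rQ = fun x => (O.indicator q x).toReal / c := by
    intro O; funext x
    by_cases hx : x ∈ O <;> simp [hx, hrQdef]
  have hL1top : ∀ O : Set X, (∑' x, O.indicator q x) ≠ ⊤ := by
    intro O
    rw [← L1 O]
    exact ((hle1 _).trans_lt ENNReal.one_lt_top).ne
  have hQsum : ∀ O : Set X,
      (μ.toOuterMeasure (C ∩ {p | p.1 i ∈ O})).toReal / c = ∑' x, O.indicator rQ x := by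
    intro O
    rw [L1 O, ENNReal.tsum_toReal_eq (fun x => by
      by_cases hx : x ∈ O <;> simp [hx, hq_ne_top x]), ← tsum_div_const, hind_eq O]
  have hsumQ : ∀ O : Set X, Summable (O.indicator rQ) := by
    intro O
    rw [hind_eq O]
    exact (ENNReal.summable_toReal (hL1top O)).div_const c
  have hPfun : ∀ O : Set X, prob P O = ∑' x, O.indicator pi x := by
    intro O
    rw [prob, PMF.toOuterMeasure_apply, ENNReal.tsum_toReal_eq (fun x => by
      by_cases hx : x ∈ O <;> simp [hx, P.apply_ne_top x])]
    congr 1; funext x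
    by_cases hx : x ∈ O <;> simp [hx, hpidef]
  have hsumP : ∀ O : Set X, Summable (O.indicator pi) := by
    intro O
    have h1 : Summable fun x => (O.indicator P x).toReal := by
      refine ENNReal.summable_toReal ?_
      have : (∑' x, O.indicator P x) ≤ 1 := by
        calc ∑' x, O.indicator P x ≤ ∑' x, P x :=
              ENNReal.tsum_le_tsum fun x => Set.indicator_le_self O P x
          _ = 1 := P.tsum_coe
      exact (this.trans_lt ENNReal.one_lt_top).ne
    have h2 : O.indicator pi = fun x => (O.indicator P x).toReal := by
      funext x; by_cases hx : x ∈ O <;> simp [hx, hpidef]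
    rw [h2]; exact h1
  -- condXi μ i a w in terms of the sums
  have hcond : ∀ O : Set X, condXi μ i a w O = ∑' x, O.indicator rQ x := by
    intro O
    rw [← hQsum O]
    have hnum : {p : (Fin n → X) × Y | p.2 = a ∧ PrefixEq i w p.1 ∧ p.1 i ∈ O}
        = C ∩ {p | p.1 i ∈ O} := by
      ext p
      simp [hCdef, Set.mem_inter_iff, Set.mem_setOf_eq, and_assoc]
    rw [condXi, hnum, ← hCdef]
    rfl
  -- indistinguishability in sum form
  have hEO : ∀ O : Set X,
      (∑' x, O.indicator pi x) ≤ Real.exp (3 * ε) * (∑' x, O.indicator rQ x) + δhat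
      ∧ (∑' x, O.indicator rQ x) ≤ Real.exp (3 * ε) * (∑' x, O.indicator pi x) + δhat := by
    intro O
    have h : prob P O ≤ Real.exp (3 * ε) * condXi μ i a w O + δhat
        ∧ condXi μ i a w O ≤ Real.exp (3 * ε) * prob P O + δhat := hE O
    rwa [hcond O, hPfun O] at h
  have hδ : 0 ≤ δhat := by
    have h := (hEO ∅).1
    simpa using h
  -- the two bad sets
  set Bp : Set X := {x | Real.exp (6 * ε) * pi x < rQ x} with hBpdef
  set Bm : Set X := {x | rQ x < Real.exp (-(6 * ε)) * pi x} with hBmdef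
  have hexp36 : Real.exp (3 * ε) * Real.exp (-(6 * ε)) = Real.exp (-(3 * ε)) := by
    rw [← Real.exp_add]; ring_nf
  have hBp : (∑' x, Bp.indicator rQ x) ≤ δhat / (1 - Real.exp (-(3 * ε))) := by
    have hpt : ∀ x, Bp.indicator pi x ≤ Real.exp (-(6 * ε)) * Bp.indicator rQ x := by
      intro x
      by_cases hx : x ∈ Bp
      · rw [Set.indicator_of_mem hx, Set.indicator_of_mem hx]
        have hxx : Real.exp (6 * ε) * pi x < rQ x := hx
        have h1 : pi x = Real.exp (-(6 * ε)) * (Real.exp (6 * ε) * pi x) := by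
          rw [← mul_assoc, ← Real.exp_add]; simp
        rw [h1]
        exact mul_le_mul_of_nonneg_left hxx.le (Real.exp_pos _).le
      · rw [Set.indicator_of_notMem hx, Set.indicator_of_notMem hx]
        simp
    have h1 : (∑' x, Bp.indicator pi x)
        ≤ Real.exp (-(6 * ε)) * ∑' x, Bp.indicator rQ x := by
      rw [← tsum_mul_left]
      exact Summable.tsum_le_tsum hpt (hsumP Bp) ((hsumQ Bp).mul_left _)
    have h2 := (hEO Bp).2
    have h3 : (∑' x, Bp.indicator rQ x)
        ≤ Real.exp (-(3 * ε)) * (∑' x, Bp.indicator rQ x) + δhat := by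
      have h4 := mul_le_mul_of_nonneg_left h1 (Real.exp_pos (3 * ε)).le
      rw [← mul_assoc, hexp36] at h4
      linarith
    rw [le_div_iff₀ hc3']
    nlinarith [h3]
  have hBm : (∑' x, Bm.indicator rQ x) ≤ δhat / (1 - Real.exp (-(3 * ε))) := by
    have hpt : ∀ x, Bm.indicator rQ x ≤ Real.exp (-(6 * ε)) * Bm.indicator pi x := by
      intro x
      by_cases hx : x ∈ Bm
      · rw [Set.indicator_of_mem hx, Set.indicator_of_mem hx]
        exact le_of_lt hx
      · rw [Set.indicator_of_notMem hx, Set.indicator_of_notMem hx]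
        simp
    have h1 : (∑' x, Bm.indicator rQ x)
        ≤ Real.exp (-(6 * ε)) * ∑' x, Bm.indicator pi x := by
      rw [← tsum_mul_left]
      exact Summable.tsum_le_tsum hpt (hsumQ Bm) ((hsumP Bm).mul_left _)
    have h2 := (hEO Bm).1
    have hee : Real.exp (-(6 * ε)) ≤ 1 := by
      rw [Real.exp_le_one_iff]; linarith
    have h3 : (∑' x, Bm.indicator rQ x)
        ≤ Real.exp (-(3 * ε)) * (∑' x, Bm.indicator rQ x) + δhat := by
      have h4 := mul_le_mul_of_nonneg_left h2 (Real.exp_pos (-(6 * ε))).le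
      rw [mul_add, ← mul_assoc, mul_comm (Real.exp (-(6 * ε))) (Real.exp (3 * ε)), hexp36] at h4
      have h5 : Real.exp (-(6 * ε)) * δhat ≤ δhat := by
        nlinarith [Real.exp_pos (-(6 * ε))]
      linarith
    rw [le_div_iff₀ hc3']
    nlinarith [h3]
  -- the good set
  set G : Set X := {x | Real.exp (-(6 * ε)) ≤ rQ x / pi x ∧ rQ x / pi x ≤ Real.exp (6 * ε)}
    with hGdef
  have hsub : ∀ x, Gᶜ.indicator rQ x ≤ Bp.indicator rQ x + Bm.indicator rQ x := by
    intro x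
    have hBpn : 0 ≤ Bp.indicator rQ x := Set.indicator_nonneg (fun y _ => hrQ0 y) x
    have hBmn : 0 ≤ Bm.indicator rQ x := Set.indicator_nonneg (fun y _ => hrQ0 y) x
    by_cases hx : x ∈ Gᶜ
    · rw [Set.indicator_of_mem hx]
      by_cases hbp : x ∈ Bp
      · rw [Set.indicator_of_mem hbp]; linarith
      by_cases hbm : x ∈ Bm
      · rw [Set.indicator_of_mem hbm]; linarith
      by_cases hz : rQ x = 0
      · rw [hz]; linarith
      exfalso
      apply hx
      have hq0 : 0 < rQ x := lt_of_le_of_ne (hrQ0 x) (Ne.symm hz)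
      have hnbp : rQ x ≤ Real.exp (6 * ε) * pi x := not_lt.mp hbp
      have hnbm : Real.exp (-(6 * ε)) * pi x ≤ rQ x := not_lt.mp hbm
      have hpipos : 0 < pi x := by
        rcases (hpi0 x).lt_or_eq with h | h
        · exact h
        · exfalso; rw [← h] at hnbp; simp at hnbp; linarith
      constructor
      · rw [le_div_iff₀ hpipos]
        linarith [hnbm]
      · rw [div_le_iff₀ hpipos]
        linarith [hnbp]
    · rw [Set.indicator_of_notMem hx]; linarith
  have hGsplit : (∑' x, G.indicator rQ x) + (∑' x, Gᶜ.indicator rQ x) = 1 := by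
    rw [← Summable.tsum_add (hsumQ G) (hsumQ Gᶜ)]
    have heq : (fun x => G.indicator rQ x + Gᶜ.indicator rQ x) = rQ := by
      funext x
      by_cases hx : x ∈ G <;> simp [hx]
    have h := hQsum Set.univ
    have hCu : C ∩ {p : (Fin n → X) × Y | p.1 i ∈ (Set.univ : Set X)} = C := by simp
    rw [hCu] at h
    simp only [Set.indicator_univ] at h
    calc (∑' x, (G.indicator rQ x + Gᶜ.indicator rQ x)) = ∑' x, rQ x := by rw [heq]
      _ = (μ.toOuterMeasure C).toReal / c := h.symm
      _ = 1 := div_self (ne_of_gt hcpos)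
  -- identify conditional probabilities at points of C
  have hccond : ∀ p : (Fin n → X) × Y, p ∈ C → ∀ x : X,
      condXi μ i p.2 p.1 {x} = rQ x := by
    intro p hp x
    obtain ⟨hpa, hpw⟩ : p.2 = a ∧ PrefixEq i w p.1 := hp
    have hsets : ∀ O : Set X,
        {p' : (Fin n → X) × Y | p'.2 = p.2 ∧ PrefixEq i p.1 p'.1 ∧ p'.1 i ∈ O}
          = {p' | p'.2 = a ∧ PrefixEq i w p'.1 ∧ p'.1 i ∈ O} := by
      intro O; ext p'
      simp only [Set.mem_setOf_eq, hpa]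
      constructor
      · rintro ⟨h1, h2, h3⟩
        exact ⟨h1, fun j hj => (h2 j hj).trans (hpw j hj), h3⟩
      · rintro ⟨h1, h2, h3⟩
        exact ⟨h1, fun j hj => (h2 j hj).trans (hpw j hj).symm, h3⟩
    have hsets2 : {p' : (Fin n → X) × Y | p'.2 = p.2 ∧ PrefixEq i p.1 p'.1}
        = {p' | p'.2 = a ∧ PrefixEq i w p'.1} := by
      ext p'
      simp only [Set.mem_setOf_eq, hpa]
      constructor
      · rintro ⟨h1, h2⟩
        exact ⟨h1, fun j hj => (h2 j hj).trans (hpw j hj)⟩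
      · rintro ⟨h1, h2⟩
        exact ⟨h1, fun j hj => (h2 j hj).trans (hpw j hj).symm⟩
    have heq : condXi μ i p.2 p.1 {x} = condXi μ i a w {x} := by
      rw [condXi, condXi, hsets, hsets2]
    rw [heq, hcond {x}]
    rw [tsum_eq_single x (fun b hb => by
      rw [Set.indicator_of_notMem (by simpa using hb)])]
    simp
  -- rewrite the event with F_i as C ∩ {p | p.1 i ∈ G}
  have hFev : {p : (Fin n → X) × Y | p.2 = a ∧ PrefixEq i w p.1 ∧
        (p.2, p.1) ∈ Fset μ P i ε} = C ∩ {p | p.1 i ∈ G} := by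
    ext p
    simp only [Set.mem_inter_iff, Set.mem_setOf_eq]
    constructor
    · rintro ⟨h1, h2, h3⟩
      have hpC : p ∈ C := ⟨h1, h2⟩
      have hcc := hccond p hpC (p.1 i)
      obtain ⟨h4, h5⟩ : Real.exp (-(6 * ε)) ≤ condXi μ i p.2 p.1 {p.1 i} / (P (p.1 i)).toReal
          ∧ condXi μ i p.2 p.1 {p.1 i} / (P (p.1 i)).toReal ≤ Real.exp (6 * ε) := h3
      rw [hcc] at h4 h5
      exact ⟨hpC, h4, h5⟩
    · rintro ⟨hpC, h4, h5⟩
      have hcc := hccond p hpC (p.1 i)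
      obtain ⟨h1, h2⟩ : p.2 = a ∧ PrefixEq i w p.1 := hpC
      refine ⟨h1, h2, ?_⟩
      show Real.exp (-(6 * ε)) ≤ condXi μ i p.2 p.1 {p.1 i} / (P (p.1 i)).toReal
          ∧ condXi μ i p.2 p.1 {p.1 i} / (P (p.1 i)).toReal ≤ Real.exp (6 * ε)
      rw [hcc]
      exact ⟨h4, h5⟩
  -- final computation
  rw [hFev]
  have h9 : prob μ (C ∩ {p : (Fin n → X) × Y | p.1 i ∈ G}) / c = ∑' x, G.indicator rQ x :=
    hQsum G
  rw [h9]
  have hGc_le : (∑' x, Gᶜ.indicator rQ x)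
      ≤ δhat / (1 - Real.exp (-(3 * ε))) + δhat / (1 - Real.exp (-(3 * ε))) := by
    calc (∑' x, Gᶜ.indicator rQ x)
        ≤ ∑' x, (Bp.indicator rQ x + Bm.indicator rQ x) :=
          Summable.tsum_le_tsum hsub (hsumQ Gᶜ) ((hsumQ Bp).add (hsumQ Bm))
      _ = (∑' x, Bp.indicator rQ x) + ∑' x, Bm.indicator rQ x :=
          Summable.tsum_add (hsumQ Bp) (hsumQ Bm)
      _ ≤ _ := add_le_add hBp hBm
  have hring : 2 * δhat / (1 - Real.exp (-(3 * ε)))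
      = δhat / (1 - Real.exp (-(3 * ε))) + δhat / (1 - Real.exp (-(3 * ε))) := by
    ring
  linarith [hGsplit, hGc_le]
end
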